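/- Let ℋ be a complex Hilbert space, H a bounded non-negative self-adjoint operator on ℋ, 𝔥 ⊆ ℋ a closed subspace with orthogonal projection P onto 𝔥, and K the compression of H to 𝔥. Then for every f ∈ 𝔥 and every t₀ > 0, (P exp(−i(t/n)H) P)^n f → exp(−itK) f as n → ∞, uniformly in t ∈ [0, t₀], where P exp(−i(t/n)H) P denotes the operator f ↦ P(exp(−i(t/n)H) f) on 𝔥. -/

import Mathlib

open Filter Topology NormedSpace

set_option maxHeartbeats 1000000
set_option synthInstance.maxHeartbeats 400000

-- quadratic bound
lemma my_exp_quad {𝔸 : Type*} [NormedRing 𝔸] [NormedAlgebra ℂ 𝔸] [CompleteSpace 𝔸] (A : 𝔸) :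
    ‖exp A - 1 - A‖ ≤ ‖A‖ ^ 2 * Real.exp ‖A‖ := by
  set f : ℕ → 𝔸 := fun n => ((n.factorial : ℂ)⁻¹) • A ^ n with hf
  have h1 : Summable f := expSeries_summable' (𝕂 := ℂ) A
  have h2 : Summable fun n => f (n + 1) := (summable_nat_add_iff 1).2 h1
  have key : exp A - 1 - A = ∑' n, f (n + 2) := by
    have e0 : exp A = ∑' n, f n := by rw [exp_eq_tsum ℂ]
    rw [e0, h1.tsum_eq_zero_add, h2.tsum_eq_zero_add]
    have : f 0 = 1 := by simp [hf]
    have h1' : f 1 = A := by simp [hf]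
    rw [this, h1']
    abel
  rw [key]
  have hsum : HasSum (fun n : ℕ => ‖A‖ ^ 2 * (‖A‖ ^ n / n.factorial))
      (‖A‖ ^ 2 * Real.exp ‖A‖) := by
    have := (Real.summable_pow_div_factorial ‖A‖).hasSum
    have he : ∑' n : ℕ, ‖A‖ ^ n / n.factorial = Real.exp ‖A‖ := by
      rw [Real.exp_eq_exp_ℝ, exp_eq_tsum_div]
    rw [he] at this
    exact this.mul_left _
  refine tsum_of_norm_bounded hsum fun n => ?_
  have hnorm : ‖f (n + 2)‖ ≤ (((n+2).factorial) : ℝ)⁻¹ * ‖A‖ ^ (n + 2) := by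
    rw [hf, norm_smul]
    gcongr
    · simp
    · exact norm_pow_le' A (by omega)
  refine hnorm.trans ?_
  have hfact : ((n).factorial : ℝ) ≤ (((n+2).factorial) : ℝ) := by
    exact_mod_cast Nat.factorial_le (by omega)
  have hfpos : (0:ℝ) < (n).factorial := by positivity
  calc (((n+2).factorial) : ℝ)⁻¹ * ‖A‖ ^ (n + 2) ≤ ((n).factorial : ℝ)⁻¹ * ‖A‖ ^ (n + 2) := by
        gcongr
      _ = ‖A‖ ^ 2 * (‖A‖ ^ n / n.factorial) := by ring

-- telescoping
lemma my_pow_sub_pow {𝔸 : Type*} [NormedRing 𝔸] (h1 : ‖(1 : 𝔸)‖ ≤ 1)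
    (A B : 𝔸) (hA : ‖A‖ ≤ 1) (hB : ‖B‖ ≤ 1) (n : ℕ) :
    ‖A ^ n - B ^ n‖ ≤ n * ‖A - B‖ := by
  induction n with
  | zero => simp
  | succ m ih =>
    have hAm : ‖A ^ m‖ ≤ 1 := by
      rcases Nat.eq_zero_or_pos m with h | h
      · simpa [h] using h1
      · exact (norm_pow_le' A h).trans (pow_le_one₀ (norm_nonneg A) hA)
    have hBm : ‖B ^ m‖ ≤ 1 := by
      rcases Nat.eq_zero_or_pos m with h | h
      · simpa [h] using h1
      · exact (norm_pow_le' B h).trans (pow_le_one₀ (norm_nonneg B) hB)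
    have hid : A ^ (m + 1) - B ^ (m + 1) = A ^ m * (A - B) + (A ^ m - B ^ m) * B := by
      rw [pow_succ, pow_succ]; noncomm_ring
    calc ‖A ^ (m + 1) - B ^ (m + 1)‖
        ≤ ‖A ^ m * (A - B)‖ + ‖(A ^ m - B ^ m) * B‖ := by rw [hid]; exact norm_add_le _ _
      _ ≤ ‖A ^ m‖ * ‖A - B‖ + ‖A ^ m - B ^ m‖ * ‖B‖ :=
          add_le_add (norm_mul_le _ _) (norm_mul_le _ _)
      _ ≤ 1 * ‖A - B‖ + (m * ‖A - B‖) * 1 := by gcongr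
      _ = (m + 1 : ℕ) * ‖A - B‖ := by push_cast; ring

-- exp of skew-adjoint is an isometry
lemma my_exp_skew_isometry {E : Type*} [NormedAddCommGroup E] [InnerProductSpace ℂ E]
    [CompleteSpace E] (T : E →L[ℂ] E) (hT : IsSelfAdjoint T) (s : ℝ) (g : E) :
    ‖exp ((-(Complex.I * (s : ℂ))) • T) g‖ = ‖g‖ := by
  set A : E →L[ℂ] E := (-(Complex.I * (s : ℂ))) • T with hA
  have hstar : star A = -A := by
    rw [hA, star_smul, hT.star_eq]
    have : star (-(Complex.I * (s : ℂ))) = Complex.I * (s : ℂ) := by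
      simp [Complex.ext_iff]
    rw [this, ← neg_smul, neg_neg]
  have hmul : star (exp A) * exp A = 1 := by
    letI : NormedAlgebra ℚ (E →L[ℂ] E) := .restrictScalars ℚ ℂ _
    rw [star_exp, hstar, ← exp_add_of_commute (Commute.neg_left (Commute.refl A)),
      neg_add_cancel, exp_zero]
  have happ : ContinuousLinearMap.adjoint (exp A) ((exp A) g) = g := by
    rw [← ContinuousLinearMap.star_eq_adjoint]
    have := congrArg (fun (S : E →L[ℂ] E) => S g) hmul
    simpa using this
  have hinner : (inner ℂ ((exp A) g) ((exp A) g) : ℂ) = inner ℂ g g := by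
    rw [← ContinuousLinearMap.adjoint_inner_left (exp A) g ((exp A) g), happ]
  have hre : ‖(exp A) g‖ ^ 2 = ‖g‖ ^ 2 := by
    have h2 := hinner
    rw [inner_self_eq_norm_sq_to_K, inner_self_eq_norm_sq_to_K] at h2
    exact_mod_cast h2
  have := congrArg Real.sqrt hre
  rwa [Real.sqrt_sq (norm_nonneg _), Real.sqrt_sq (norm_nonneg _)] at this
/-- **The Zeno product formula** (bounded case). The closed subspace `𝔥 ⊆ ℋ` is modelled
by a Hilbert space `𝔥` with a linear isometric embedding `J : 𝔥 → ℋ`; `P = J*` is the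
orthogonal projection onto `𝔥`, characterized by `⟪P g, f⟫ = ⟪g, J f⟫`. For a bounded
non-negative self-adjoint `H` with compression `K = P H J`, one has
`(P exp(-i(t/n)H) P)ⁿ f → exp(-itK) f` as `n → ∞`, uniformly in `t ∈ [0, t₀]`. -/
theorem zeno_product_formula_exponential
    {ℋ : Type*} [NormedAddCommGroup ℋ] [InnerProductSpace ℂ ℋ] [CompleteSpace ℋ]
    {𝔥 : Type*} [NormedAddCommGroup 𝔥] [InnerProductSpace ℂ 𝔥] [CompleteSpace 𝔥]
    (J : 𝔥 →ₗᵢ[ℂ] ℋ) (P : ℋ →L[ℂ] 𝔥)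
    (hP : ∀ (g : ℋ) (f : 𝔥), (inner ℂ (P g) f : ℂ) = inner ℂ g (J f))
    (Hop : ℋ →L[ℂ] ℋ) (hsa : IsSelfAdjoint Hop)
    (hpos : ∀ g : ℋ, 0 ≤ (inner ℂ (Hop g) g : ℂ).re)
    (K : 𝔥 →L[ℂ] 𝔥) (hK : ∀ f : 𝔥, K f = P (Hop (J f)))
    (G : ℝ → (𝔥 →L[ℂ] 𝔥))
    (hG : ∀ (s : ℝ) (f : 𝔥),
      G s f = P (NormedSpace.exp ((-(Complex.I * (s : ℂ))) • Hop) (J f))) :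
    ∀ f : 𝔥, ∀ t₀ : ℝ, 0 < t₀ →
      TendstoUniformlyOn (fun (n : ℕ) (t : ℝ) => ((G (t / n)) ^ n) f)
        (fun t : ℝ => NormedSpace.exp ((-(Complex.I * (t : ℂ))) • K) f)
        atTop (Set.Icc 0 t₀) := by
  intro f t₀ ht₀
  -- basic facts
  have hPJ : ∀ u : 𝔥, P (J u) = u := by
    intro u
    apply ext_inner_right ℂ
    intro v
    rw [hP, LinearIsometry.inner_map_map]
  have hPnorm : ∀ g : ℋ, ‖P g‖ ≤ ‖g‖ := by
    intro g
    rcases eq_or_lt_of_le (norm_nonneg (P g)) with h | h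
    · rw [← h]; exact norm_nonneg g
    have key : ‖P g‖ * ‖P g‖ ≤ ‖g‖ * ‖P g‖ := by
      have h2 : ‖(inner ℂ (P g) (P g) : ℂ)‖ ≤ ‖g‖ * ‖J (P g)‖ := by
        rw [hP g (P g)]; exact norm_inner_le_norm _ _
      rw [J.norm_map] at h2
      calc ‖P g‖ * ‖P g‖ = ‖(inner ℂ (P g) (P g) : ℂ)‖ := by
            rw [inner_self_eq_norm_sq_to_K]
            simp [sq, abs_of_nonneg (norm_nonneg (P g))]
        _ ≤ _ := h2
    exact le_of_mul_le_mul_right key h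
  have hP' : ∀ (u : 𝔥) (g : ℋ), (inner ℂ (J u) g : ℂ) = inner ℂ u (P g) := by
    intro u g
    calc (inner ℂ (J u) g : ℂ) = starRingEnd ℂ (inner ℂ g (J u)) := (inner_conj_symm _ _).symm
      _ = starRingEnd ℂ (inner ℂ (P g) u) := by rw [hP]
      _ = inner ℂ u (P g) := inner_conj_symm _ _
  have hHsym : ∀ x y : ℋ, (inner ℂ (Hop x) y : ℂ) = inner ℂ x (Hop y) := fun x y =>
    (ContinuousLinearMap.isSelfAdjoint_iff_isSymmetric.mp hsa) x y
  have hKsa : IsSelfAdjoint K := by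
    rw [ContinuousLinearMap.isSelfAdjoint_iff_isSymmetric]
    intro u v
    show (inner ℂ (K u) v : ℂ) = inner ℂ u (K v)
    calc (inner ℂ (K u) v : ℂ) = inner ℂ (P (Hop (J u))) v := by rw [hK]
      _ = inner ℂ (Hop (J u)) (J v) := hP _ _
      _ = inner ℂ (J u) (Hop (J v)) := hHsym _ _
      _ = inner ℂ u (P (Hop (J v))) := hP' _ _
      _ = inner ℂ u (K v) := by rw [hK]
  -- contraction properties
  have hGnorm : ∀ s : ℝ, ‖G s‖ ≤ 1 := by
    intro s
    refine ContinuousLinearMap.opNorm_le_bound _ zero_le_one fun u => ?_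
    rw [hG, one_mul]
    calc ‖P (exp ((-(Complex.I * (s : ℂ))) • Hop) (J u))‖
        ≤ ‖exp ((-(Complex.I * (s : ℂ))) • Hop) (J u)‖ := hPnorm _
      _ = ‖J u‖ := my_exp_skew_isometry Hop hsa s (J u)
      _ = ‖u‖ := J.norm_map u
  have hBnorm : ∀ s : ℝ, ‖exp ((-(Complex.I * (s : ℂ))) • K)‖ ≤ 1 := fun s =>
    ContinuousLinearMap.opNorm_le_bound _ zero_le_one fun u => by
      rw [one_mul, my_exp_skew_isometry K hKsa s u]
  -- norms of generators
  have hnormA : ∀ (s : ℝ) (T : ℋ →L[ℂ] ℋ), ‖(-(Complex.I * (s : ℂ))) • T‖ = |s| * ‖T‖ := by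
    intro s T
    rw [norm_smul]
    congr 1
    simp [Real.norm_eq_abs]
  have hnormB : ∀ (s : ℝ) (T : 𝔥 →L[ℂ] 𝔥), ‖(-(Complex.I * (s : ℂ))) • T‖ = |s| * ‖T‖ := by
    intro s T
    rw [norm_smul]
    congr 1
    simp [Real.norm_eq_abs]
  set C : ℝ := ‖Hop‖ ^ 2 * Real.exp (t₀ * ‖Hop‖) + ‖K‖ ^ 2 * Real.exp (t₀ * ‖K‖) with hCdef
  have hC0 : 0 ≤ C := by positivity
  -- the quadratic estimate
  have hdiff : ∀ s : ℝ, 0 ≤ s → s ≤ t₀ →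
      ‖G s - exp ((-(Complex.I * (s : ℂ))) • K)‖ ≤ C * s ^ 2 := by
    intro s hs0 hs1
    refine ContinuousLinearMap.opNorm_le_bound _ (by positivity) fun u => ?_
    have hpt : (G s - exp ((-(Complex.I * (s : ℂ))) • K)) u =
        P ((exp ((-(Complex.I * (s : ℂ))) • Hop) - 1 - (-(Complex.I * (s : ℂ))) • Hop) (J u))
          - ((exp ((-(Complex.I * (s : ℂ))) • K) - 1 - (-(Complex.I * (s : ℂ))) • K) u) := by
      simp only [ContinuousLinearMap.sub_apply, ContinuousLinearMap.one_apply,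
        ContinuousLinearMap.smul_apply, map_sub, map_smul, hPJ, hG s u, ← hK]
      abel
    rw [hpt]
    have e1 : ‖P ((exp ((-(Complex.I * (s : ℂ))) • Hop) - 1 - (-(Complex.I * (s : ℂ))) • Hop) (J u))‖
        ≤ (s ^ 2 * ‖Hop‖ ^ 2 * Real.exp (t₀ * ‖Hop‖)) * ‖u‖ := by
      calc ‖P _‖ ≤ ‖(exp ((-(Complex.I * (s : ℂ))) • Hop) - 1 - (-(Complex.I * (s : ℂ))) • Hop) (J u)‖ :=
            hPnorm _
        _ ≤ ‖exp ((-(Complex.I * (s : ℂ))) • Hop) - 1 - (-(Complex.I * (s : ℂ))) • Hop‖ * ‖J u‖ :=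
            ContinuousLinearMap.le_opNorm _ _
        _ ≤ (‖(-(Complex.I * (s : ℂ))) • Hop‖ ^ 2
              * Real.exp ‖(-(Complex.I * (s : ℂ))) • Hop‖) * ‖J u‖ := by
            gcongr
            exact my_exp_quad _
        _ ≤ (s ^ 2 * ‖Hop‖ ^ 2 * Real.exp (t₀ * ‖Hop‖)) * ‖u‖ := by
            rw [hnormA, J.norm_map, abs_of_nonneg hs0]
            gcongr ?_ * ‖u‖
            have h1 : (s * ‖Hop‖) ^ 2 = s ^ 2 * ‖Hop‖ ^ 2 := by ring
            rw [h1]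
            exact mul_le_mul_of_nonneg_left
              (Real.exp_le_exp.mpr (mul_le_mul_of_nonneg_right hs1 (norm_nonneg _)))
              (by positivity)
    have e2 : ‖(exp ((-(Complex.I * (s : ℂ))) • K) - 1 - (-(Complex.I * (s : ℂ))) • K) u‖
        ≤ (s ^ 2 * ‖K‖ ^ 2 * Real.exp (t₀ * ‖K‖)) * ‖u‖ := by
      calc ‖_‖ ≤ ‖exp ((-(Complex.I * (s : ℂ))) • K) - 1 - (-(Complex.I * (s : ℂ))) • K‖ * ‖u‖ :=
            ContinuousLinearMap.le_opNorm _ _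
        _ ≤ (‖(-(Complex.I * (s : ℂ))) • K‖ ^ 2
              * Real.exp ‖(-(Complex.I * (s : ℂ))) • K‖) * ‖u‖ := by
            gcongr
            exact my_exp_quad _
        _ ≤ (s ^ 2 * ‖K‖ ^ 2 * Real.exp (t₀ * ‖K‖)) * ‖u‖ := by
            rw [hnormB, abs_of_nonneg hs0]
            gcongr ?_ * ‖u‖
            have h1 : (s * ‖K‖) ^ 2 = s ^ 2 * ‖K‖ ^ 2 := by ring
            rw [h1]
            exact mul_le_mul_of_nonneg_left
              (Real.exp_le_exp.mpr (mul_le_mul_of_nonneg_right hs1 (norm_nonneg _)))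
              (by positivity)
    calc ‖_ - _‖ ≤ _ + _ := norm_sub_le _ _
      _ ≤ (s ^ 2 * ‖Hop‖ ^ 2 * Real.exp (t₀ * ‖Hop‖)) * ‖u‖
            + (s ^ 2 * ‖K‖ ^ 2 * Real.exp (t₀ * ‖K‖)) * ‖u‖ := add_le_add e1 e2
      _ = C * s ^ 2 * ‖u‖ := by rw [hCdef]; ring
  -- main estimate
  have hone : ‖(1 : 𝔥 →L[ℂ] 𝔥)‖ ≤ 1 := by
    simpa [ContinuousLinearMap.one_def] using ContinuousLinearMap.norm_id_le (E := 𝔥)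
  have main : ∀ n : ℕ, 1 ≤ n → ∀ t ∈ Set.Icc (0 : ℝ) t₀,
      ‖((G (t / n)) ^ n) f - exp ((-(Complex.I * (t : ℂ))) • K) f‖
        ≤ C * t₀ ^ 2 * ‖f‖ / n := by
    intro n hn t ht
    obtain ⟨ht0, ht1⟩ := ht
    have hnR : (0 : ℝ) < n := by exact_mod_cast hn
    have hs0 : 0 ≤ t / n := div_nonneg ht0 hnR.le
    have hs1 : t / n ≤ t₀ := le_trans (div_le_self ht0 (by exact_mod_cast hn)) ht1
    have hsplit : exp ((-(Complex.I * (t : ℂ))) • K)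
        = (exp ((-(Complex.I * ((t / n : ℝ) : ℂ))) • K)) ^ n := by
      letI : NormedAlgebra ℚ (𝔥 →L[ℂ] 𝔥) := .restrictScalars ℚ ℂ _
      rw [← exp_nsmul]
      congr 1
      rw [← Nat.cast_smul_eq_nsmul ℂ, smul_smul]
      congr 1
      have hn0 : (n : ℂ) ≠ 0 := Nat.cast_ne_zero.mpr (by omega)
      push_cast
      field_simp
    rw [hsplit]
    have hop : ‖(G (t / n)) ^ n - (exp ((-(Complex.I * ((t / n : ℝ) : ℂ))) • K)) ^ n‖
        ≤ n * ‖G (t / n) - exp ((-(Complex.I * ((t / n : ℝ) : ℂ))) • K)‖ :=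
      my_pow_sub_pow hone _ _ (hGnorm _) (hBnorm _) n
    calc ‖((G (t / n)) ^ n) f - ((exp ((-(Complex.I * ((t / n : ℝ) : ℂ))) • K)) ^ n) f‖
        = ‖((G (t / n)) ^ n - (exp ((-(Complex.I * ((t / n : ℝ) : ℂ))) • K)) ^ n) f‖ := by
          rw [ContinuousLinearMap.sub_apply]
      _ ≤ ‖(G (t / n)) ^ n - (exp ((-(Complex.I * ((t / n : ℝ) : ℂ))) • K)) ^ n‖ * ‖f‖ :=
          ContinuousLinearMap.le_opNorm _ _
      _ ≤ ((n : ℝ) * (C * (t / n) ^ 2)) * ‖f‖ := by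
          gcongr
          exact hop.trans (by gcongr; exact hdiff _ hs0 hs1)
      _ = C * t ^ 2 * ‖f‖ / n := by field_simp
      _ ≤ C * t₀ ^ 2 * ‖f‖ / n := by gcongr
  -- conclude uniform convergence
  rw [Metric.tendstoUniformlyOn_iff]
  intro ε hε
  have hlim : Tendsto (fun n : ℕ => C * t₀ ^ 2 * ‖f‖ / n) atTop (𝓝 0) :=
    tendsto_const_div_atTop_nhds_zero_nat _
  have hev : ∀ᶠ n : ℕ in atTop, C * t₀ ^ 2 * ‖f‖ / n < ε := hlim.eventually_lt_const hε
  filter_upwards [hev, eventually_ge_atTop 1] with n h1 h2 t ht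
  rw [dist_comm, dist_eq_norm]
  exact lt_of_le_of_lt (main n h2 t ht) h1
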